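/- arXiv:2409.05473 — 2 statements merged into one kernel-verified Lean document; each statement's English description precedes it below -/
import Mathlib

section
/- Let ρ_s, c_s, λ̄, λ, c₁, c₂ > 0 and π₁, π₂, σ₀, w₀, m₁₀, q₁₀, m₂₀, q₂₀ ∈ ℝ. Suppose the real numbers σ_R, α_{1L}, m_{1L}, m_{2L} satisfy (E3) σ_R α_{1L} = π₁ α_{1L} − c₁² m_{1L}, (E4) σ_R (1 − α_{1L}) = π₂(1 − α_{1L}) − c₂² m_{2L}, (E5) (w₀ρ_s c_s² + λ̄(σ_R − σ₀)) m_{1L} = ρ_s c_s² (λ(m_{1L} − m₁₀) + q₁₀) and (E6) (w₀ρ_s c_s² + λ̄(σ_R − σ₀)) m_{2L} = ρ_s c_s² (λ(m_{2L} − m₂₀) + q₂₀), with m_{1L} ≠ 0 and D₂ := λ m_{1L} c_s² ρ_s − λ m₁₀ c_s² ρ_s − m_{1L} w₀ c_s² ρ_s + λ̄ m_{1L} σ₀ − λ̄ m_{1L} π₁ + q₁₀ c_s² ρ_s ≠ 0. Then a₃ m_{1L}³ + a₂ m_{1L}² + a₁ m_{1L} + a₀ = 0, where a₃ = λ̄·[(λ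 − w₀) ρ_s c_s² ((m₁₀ c₁² + m₂₀ c₂²)λ − q₁₀ c₁² − q₂₀ c₂²) − λ̄ ((c₁²(π₂ − σ₀) m₁₀ + m₂₀ c₂² (π₁ − σ₀))λ − c₁²(π₂ − σ₀) q₁₀ − q₂₀ c₂² (π₁ − σ₀))], a₂ = (ρ_s² (λ − w₀)² c_s⁴ − λ̄ ρ_s ((m₁₀ c₁² + m₂₀ c₂² − 2σ₀ + π₁ + π₂)λ − q₁₀ c₁² + (−π₁ − π₂ + 2σ₀) w₀ − q₂₀ c₂²) c_s² + λ̄² (π₂ − σ₀)(π₁ − σ₀)) · (λ m₁₀ − q₁₀), a₁ = −2 ρ_s c_s² (λ m₁₀ − q₁₀)² (ρ_s (λ − w₀) c_s² − λ̄ (π₁ + π₂ − 2σ₀)/2), and a₀ = ρ_s² c_s⁴ (λ m₁₀ − q₁₀)³. -/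
/-- Step 1 of the Riemann solver: eliminating `σ_R`, `α₁L` and `m₂L` from the
coupling equations (E3)–(E6) yields the cubic equation
`a₃ m₁L³ + a₂ m₁L² + a₁ m₁L + a₀ = 0` with the explicit coefficients from the
appendix of the paper. -/
theorem riemann_solver_cubic
    (ρs cs lamBar lam c1 c2 : ℝ)
    (hρ : 0 < ρs) (hcs : 0 < cs) (hlb : 0 < lamBar) (hl : 0 < lam)
    (hc1 : 0 < c1) (hc2 : 0 < c2)
    (π1 π2 σ0 w0 m10 q10 m20 q20 : ℝ)
    (σR α1L m1L m2L : ℝ)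
    (hE3 : σR * α1L = π1 * α1L - c1 ^ 2 * m1L)
    (hE4 : σR * (1 - α1L) = π2 * (1 - α1L) - c2 ^ 2 * m2L)
    (hE5 : (w0 * ρs * cs ^ 2 + lamBar * (σR - σ0)) * m1L
            = ρs * cs ^ 2 * (lam * (m1L - m10) + q10))
    (hE6 : (w0 * ρs * cs ^ 2 + lamBar * (σR - σ0)) * m2L
            = ρs * cs ^ 2 * (lam * (m2L - m20) + q20))
    (hm1L : m1L ≠ 0)
    (D2 : ℝ)
    (hD2 : D2 = lam * m1L * cs ^ 2 * ρs - lam * m10 * cs ^ 2 * ρs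
        - m1L * w0 * cs ^ 2 * ρs + lamBar * m1L * σ0 - lamBar * m1L * π1
        + q10 * cs ^ 2 * ρs)
    (hD2ne : D2 ≠ 0)
    (a3 a2 a1 a0 : ℝ)
    (ha3 : a3 = lamBar *
        ((lam - w0) * ρs * cs ^ 2
            * ((m10 * c1 ^ 2 + m20 * c2 ^ 2) * lam - q10 * c1 ^ 2 - q20 * c2 ^ 2)
          - lamBar *
            ((c1 ^ 2 * (π2 - σ0) * m10 + m20 * c2 ^ 2 * (π1 - σ0)) * lam
              - c1 ^ 2 * (π2 - σ0) * q10 - q20 * c2 ^ 2 * (π1 - σ0))))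
    (ha2 : a2 = (ρs ^ 2 * (lam - w0) ^ 2 * cs ^ 4
          - lamBar * ρs *
            ((m10 * c1 ^ 2 + m20 * c2 ^ 2 - 2 * σ0 + π1 + π2) * lam
              - q10 * c1 ^ 2 + (-π1 - π2 + 2 * σ0) * w0 - q20 * c2 ^ 2) * cs ^ 2
          + lamBar ^ 2 * (π2 - σ0) * (π1 - σ0))
        * (lam * m10 - q10))
    (ha1 : a1 = -2 * ρs * cs ^ 2 * (lam * m10 - q10) ^ 2
        * (ρs * (lam - w0) * cs ^ 2 - lamBar * (π1 + π2 - 2 * σ0) / 2))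
    (ha0 : a0 = ρs ^ 2 * cs ^ 4 * (lam * m10 - q10) ^ 3) :
    a3 * m1L ^ 3 + a2 * m1L ^ 2 + a1 * m1L + a0 = 0 := by
  have hK : (ρs * cs ^ 2 : ℝ) ≠ 0 := by positivity
  have hQ : (lam * m10 - q10) * m2L = (lam * m20 - q20) * m1L := by
    have h5 : ρs * cs ^ 2 * ((lam * m10 - q10) * m2L)
        = ρs * cs ^ 2 * ((lam * m20 - q20) * m1L) := by
      linear_combination m2L * hE5 - m1L * hE6
    exact mul_left_cancel₀ hK h5
  subst hD2 ha3 ha2 ha1 ha0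
  linear_combination
      ((lamBar * m1L) ^ 2 * (lam * m10 - q10) * (σR - π2)) * hE3
    + ((lamBar * m1L) ^ 2 * (lam * m10 - q10) * (σR - π1)) * hE4
    - (c2 ^ 2 * (lamBar * m1L) ^ 2 * (σR - π1)) * hQ
    - (c2 ^ 2 * (lam * m20 - q20) * m1L * (lamBar * m1L)
        + (lam * m10 - q10) * (lamBar * m1L) * (σR - π2)
        + c1 ^ 2 * m1L * (lam * m10 - q10) * (lamBar * m1L)
        + (lam * m10 - q10) * (lam * m1L * cs ^ 2 * ρs - lam * m10 * cs ^ 2 * ρs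
            - m1L * w0 * cs ^ 2 * ρs + lamBar * m1L * σ0 - lamBar * m1L * π1
            + q10 * cs ^ 2 * ρs)) * hE5
end

section
/- Let ρ_s, λ̄, λ, c₁, c₂ > 0 and π₁, π₂, σ₀, w₀, α₁₀, m₁₀, q₁₀, m₂₀, q₂₀ ∈ ℝ with m₁₀ ≠ 0 and m₂₀ ≠ 0. Suppose the real numbers w_R, m_{1L}, m_{2L}, q_{1L}, q_{2L} with m_{1L} ≠ 0 and m_{2L} ≠ 0 satisfy (E1) w_R m_{1L} = q_{1L}, (E2) w_R m_{2L} = q_{2L}, and (E7) −σ₀ + λ̄ ρ_s (w₀ − w_R) = Σ_{k=1,2} [λ(q_{kL} − q_{k0}) + q_{k0}²/m_{k0} + c_k² m_{k0} − π_k α_{k0} − q_{kL}²/m_{kL}] where α₂₀ = 1 − α₁₀. Then b₂ q_{2L}² + b₁ q_{2L} + b₀ = 0, where b₂ = −(m_{1L} + m_{2L}) m₂₀ m₁₀, b₁ = (λ̄ ρ_s + λ m_{2L} + λ m_{1L}) m₁₀ m_{2L} m₂₀, and b₀ = (((−π₁ + π₂) α₁₀ − (q₁₀ + q₂₀) λ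 − w₀ ρ_s λ̄ + σ₀ − π₂) m_{2L} m₂₀ + q₂₀² m_{2L} + m_{2L} c₂² m₂₀²) m₁₀ m_{2L} + (m₁₀² c₁² + q₁₀²) m_{2L}² m₂₀. -/
/-!
Under the velocity coupling `q_kL = w_R m_kL` the kinetic fluxes `q_kL² / m_kL` collapse to
`w_R² m_kL`, so (E7) is a quadratic equation in the interface velocity `w_R`. Multiplying it by
`m₁₀ m₂₀ m₂L²` clears the denominators of the fluid traces and, since `w_R m₂L = q₂L`, turns it
into the stated quadratic in `q₂L`.
-/

/-- Holds also for `m = 0`, where both sides vanish because `x / 0 = 0`. -/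
theorem mul_sq_div_right {K : Type*} [Field K] (w m : K) :
    (w * m) ^ 2 / m = w ^ 2 * m := by
  rw [mul_pow, sq m, mul_div_assoc, mul_self_div_self]

theorem coupling_quadratic_in_velocity {K : Type*} [Field K]
    (ρs lamBar lam c1 c2 π1 π2 σ0 w0 α10 m10 q10 m20 q20 wR m1L m2L : K)
    (hE7 : -σ0 + lamBar * ρs * (w0 - wR) =
        (lam * (wR * m1L - q10) + q10 ^ 2 / m10 + c1 ^ 2 * m10 - π1 * α10
            - (wR * m1L) ^ 2 / m1L)
        + (lam * (wR * m2L - q20) + q20 ^ 2 / m20 + c2 ^ 2 * m20 - π2 * (1 - α10)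
            - (wR * m2L) ^ 2 / m2L)) :
    -(m1L + m2L) * wR ^ 2 + (lamBar * ρs + lam * (m1L + m2L)) * wR
      + ((-π1 + π2) * α10 - (q10 + q20) * lam - w0 * ρs * lamBar + σ0 - π2
        + (q10 ^ 2 / m10 + c1 ^ 2 * m10) + (q20 ^ 2 / m20 + c2 ^ 2 * m20)) = 0 := by
  rw [mul_sq_div_right, mul_sq_div_right] at hE7
  linear_combination -hE7

theorem riemann_solver_quadratic_general
    (ρs lamBar lam c1 c2 : ℝ)
    (π1 π2 σ0 w0 α10 m10 q10 m20 q20 : ℝ)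
    (hm10 : m10 ≠ 0) (hm20 : m20 ≠ 0)
    (wR m1L m2L q1L q2L : ℝ)
    (hE1 : wR * m1L = q1L)
    (hE2 : wR * m2L = q2L)
    (hE7 : -σ0 + lamBar * ρs * (w0 - wR) =
        (lam * (q1L - q10) + q10 ^ 2 / m10 + c1 ^ 2 * m10 - π1 * α10
            - q1L ^ 2 / m1L)
        + (lam * (q2L - q20) + q20 ^ 2 / m20 + c2 ^ 2 * m20 - π2 * (1 - α10)
            - q2L ^ 2 / m2L))
    (b2 b1 b0 : ℝ)
    (hb2 : b2 = -(m1L + m2L) * m20 * m10)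
    (hb1 : b1 = (lamBar * ρs + lam * m2L + lam * m1L) * m10 * m2L * m20)
    (hb0 : b0 = (((-π1 + π2) * α10 - (q10 + q20) * lam - w0 * ρs * lamBar
            + σ0 - π2) * m2L * m20 + q20 ^ 2 * m2L + m2L * c2 ^ 2 * m20 ^ 2)
          * m10 * m2L
        + (m10 ^ 2 * c1 ^ 2 + q10 ^ 2) * m2L ^ 2 * m20) :
    b2 * q2L ^ 2 + b1 * q2L + b0 = 0 := by
  subst hE1 hE2 hb2 hb1 hb0
  have hquad := coupling_quadratic_in_velocity ρs lamBar lam c1 c2 π1 π2 σ0 w0 α10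
    m10 q10 m20 q20 wR m1L m2L hE7
  have h10 : q10 ^ 2 / m10 * m10 = q10 ^ 2 := div_mul_cancel₀ _ hm10
  have h20 : q20 ^ 2 / m20 * m20 = q20 ^ 2 := div_mul_cancel₀ _ hm20
  linear_combination (m10 * m20 * m2L ^ 2) * hquad
    - (m20 * m2L ^ 2) * h10 - (m10 * m2L ^ 2) * h20

/-- Step 5 of the Riemann solver: the velocity couplings (E1), (E2) and the
combined stress–pressure coupling (E7) imply the quadratic equation
`b₂ q₂L² + b₁ q₂L + b₀ = 0` for the phasic momentum `q₂L`, with the explicit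
coefficients from the appendix of the paper. -/
theorem riemann_solver_quadratic
    (ρs lamBar lam c1 c2 : ℝ)
    (hρ : 0 < ρs) (hlb : 0 < lamBar) (hl : 0 < lam)
    (hc1 : 0 < c1) (hc2 : 0 < c2)
    (π1 π2 σ0 w0 α10 m10 q10 m20 q20 : ℝ)
    (hm10 : m10 ≠ 0) (hm20 : m20 ≠ 0)
    (wR m1L m2L q1L q2L : ℝ)
    (hm1L : m1L ≠ 0) (hm2L : m2L ≠ 0)
    (hE1 : wR * m1L = q1L)
    (hE2 : wR * m2L = q2L)
    (hE7 : -σ0 + lamBar * ρs * (w0 - wR) =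
        (lam * (q1L - q10) + q10 ^ 2 / m10 + c1 ^ 2 * m10 - π1 * α10
            - q1L ^ 2 / m1L)
        + (lam * (q2L - q20) + q20 ^ 2 / m20 + c2 ^ 2 * m20 - π2 * (1 - α10)
            - q2L ^ 2 / m2L))
    (b2 b1 b0 : ℝ)
    (hb2 : b2 = -(m1L + m2L) * m20 * m10)
    (hb1 : b1 = (lamBar * ρs + lam * m2L + lam * m1L) * m10 * m2L * m20)
    (hb0 : b0 = (((-π1 + π2) * α10 - (q10 + q20) * lam - w0 * ρs * lamBar
            + σ0 - π2) * m2L * m20 + q20 ^ 2 * m2L + m2L * c2 ^ 2 * m20 ^ 2)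
          * m10 * m2L
        + (m10 ^ 2 * c1 ^ 2 + q10 ^ 2) * m2L ^ 2 * m20) :
    b2 * q2L ^ 2 + b1 * q2L + b0 = 0 :=
  riemann_solver_quadratic_general ρs lamBar lam c1 c2 π1 π2 σ0 w0 α10 m10 q10 m20 q20 hm10 hm20 wR
    m1L m2L q1L q2L hE1 hE2 hE7 b2 b1 b0 hb2 hb1 hb0
end
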